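/- arXiv:2312.07882 — 2 statements merged into one kernel-verified Lean document; each statement's English description precedes it below -/
import Mathlib

section
/- The function g(μ) := 2 * E[1_{N>1} ∑_{i=2}^{N} 1/i], where N is a Poisson random variable with mean μ, is strictly increasing in μ > 0. -/
noncomputable def paux (n : ℕ) : ℝ := if 1 < n then 2 * ∑ i ∈ Finset.Icc 2 n, (1 : ℝ) / i else 0

lemma paux_nonneg (n : ℕ) : 0 ≤ paux n := by
  unfold paux; split
  · positivity
  · exact le_refl 0

lemma paux_le (n : ℕ) : paux n ≤ 2 * n := by
  unfold paux; split
  · have h1 : ∑ i ∈ Finset.Icc 2 n, (1 : ℝ) / i ≤ ∑ i ∈ Finset.Icc 2 n, (1:ℝ) := by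
      apply Finset.sum_le_sum
      intro i hi
      have h2 : (2:ℕ) ≤ i := (Finset.mem_Icc.mp hi).1
      have hi1 : (1:ℝ) ≤ (i:ℝ) := by exact_mod_cast Nat.one_le_of_lt h2
      rw [div_le_one (by linarith)]
      exact hi1
    have h2 : ∑ i ∈ Finset.Icc 2 n, (1:ℝ) = (Finset.Icc 2 n).card := by simp
    have h3 : ((Finset.Icc 2 n).card : ℝ) ≤ n := by
      rw [Nat.card_Icc]
      have : (n+1) - 2 ≤ n := by omega
      exact_mod_cast this
    nlinarith
  · positivity

lemma paux_mono (n : ℕ) : paux n ≤ paux (n + 1) := by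
  unfold paux
  rcases lt_trichotomy n 1 with h | h | h
  · interval_cases n <;> simp
  · subst h; norm_num
  · rw [if_pos h, if_pos (by omega)]
    have hsub : Finset.Icc 2 n ⊆ Finset.Icc 2 (n+1) := Finset.Icc_subset_Icc_right (by omega)
    gcongr with i
    all_goals first | (intro i _ _; positivity) | skip

lemma paux_two : paux 2 - paux 1 = 1 := by
  unfold paux; norm_num

lemma nat_le_two_pow (n : ℕ) : ((n : ℝ) + 1) ≤ 2 ^ (n + 1) := by
  have : n + 1 ≤ 2 ^ (n + 1) := (Nat.lt_two_pow_self (n := n+1)).le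
  exact_mod_cast this

lemma key_summable {K : ℝ} (hK : 0 ≤ K) :
    Summable (fun n : ℕ => ((n : ℝ) + 1) ^ 2 * K ^ n / n.factorial) := by
  refine Summable.of_nonneg_of_le (fun n => by positivity) (fun n => ?_)
    ((Real.summable_pow_div_factorial (4 * K)).mul_left 4)
  have h1 := nat_le_two_pow n
  have h2 : ((n:ℝ)+1)^2 ≤ 4 * 4 ^ n := by
    calc ((n:ℝ)+1)^2 ≤ ((2:ℝ) ^ (n+1))^2 := by nlinarith [h1, (Nat.cast_nonneg n : (0:ℝ) ≤ n)]
      _ = ((2:ℝ)^2) ^ (n+1) := by rw [← pow_mul, ← pow_mul, Nat.mul_comm]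
      _ = 4 * 4 ^ n := by norm_num [pow_succ]; ring
  calc ((n : ℝ) + 1) ^ 2 * K ^ n / n.factorial ≤ (4 * 4^n) * K ^n / n.factorial := by
        gcongr
    _ = 4 * ((4*K)^n / n.factorial) := by rw [mul_pow]; ring

noncomputable def pterm (n : ℕ) (y : ℝ) : ℝ := (Real.exp (-y) * y ^ n / n.factorial) * paux n
noncomputable def pc (n : ℕ) (y : ℝ) : ℝ :=
  (Real.exp (-y) * ((n : ℝ) * y ^ (n - 1)) / n.factorial) * paux n
noncomputable def pshift (n : ℕ) (y : ℝ) : ℝ :=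
  (Real.exp (-y) * y ^ n / n.factorial) * paux (n + 1)
noncomputable def pderiv (n : ℕ) (y : ℝ) : ℝ := pc n y - pterm n y

lemma hasDerivAt_pterm (n : ℕ) (y : ℝ) :
    HasDerivAt (fun z => pterm n z) (pderiv n y) y := by
  have h := (((hasDerivAt_neg y).exp.mul (hasDerivAt_pow n y)).div_const
    (n.factorial : ℝ)).mul_const (paux n)
  refine h.congr_deriv ?_
  unfold pderiv pc pterm
  ring

lemma pc_zero (y : ℝ) : pc 0 y = 0 := by unfold pc; norm_num

lemma pc_succ (n : ℕ) (y : ℝ) : pc (n + 1) y = pshift n y := by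
  unfold pc pshift
  have h : ((n + 1).factorial : ℝ) = (n + 1) * n.factorial := by
    rw [Nat.factorial_succ]; push_cast; ring
  rw [h]
  rw [Nat.add_sub_cancel]
  push_cast
  have h1 : (n.factorial : ℝ) ≠ 0 := Nat.cast_ne_zero.mpr n.factorial_ne_zero
  have h2 : ((n : ℝ) + 1) ≠ 0 := by positivity
  field_simp

variable {M y : ℝ}

lemma pterm_nonneg (n : ℕ) {y : ℝ} (hy : 0 ≤ y) : 0 ≤ pterm n y :=
  mul_nonneg (by positivity) (paux_nonneg n)

lemma pc_nonneg (n : ℕ) {y : ℝ} (hy : 0 ≤ y) : 0 ≤ pc n y :=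
  mul_nonneg (by positivity) (paux_nonneg n)

lemma pshift_nonneg (n : ℕ) {y : ℝ} (hy : 0 ≤ y) : 0 ≤ pshift n y :=
  mul_nonneg (by positivity) (paux_nonneg (n + 1))

lemma pterm_le (hy : 0 ≤ y) (hyM : y ≤ M) (hM : 1 ≤ M) (n : ℕ) :
    pterm n y ≤ 2 * (((n : ℝ) + 1) ^ 2 * M ^ n / n.factorial) := by
  have hb : paux n ≤ 2 * ((n:ℝ) + 1) ^ 2 :=
    (paux_le n).trans (by nlinarith [Nat.cast_nonneg (α := ℝ) n])
  calc pterm n y ≤ (1 * M ^ n / n.factorial) * (2 * ((n:ℝ) + 1) ^ 2) := by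
        unfold pterm
        gcongr
        all_goals first
          | positivity
          | exact paux_nonneg _
          | exact hb
          | exact Real.exp_le_one_iff.mpr (by linarith)
          | exact hy
          | exact hyM
          | exact pow_le_pow_left hy hyM n
    _ = 2 * (((n : ℝ) + 1) ^ 2 * M ^ n / n.factorial) := by ring

lemma pshift_le (hy : 0 ≤ y) (hyM : y ≤ M) (hM : 1 ≤ M) (n : ℕ) :
    pshift n y ≤ 2 * (((n : ℝ) + 1) ^ 2 * M ^ n / n.factorial) := by
  have hb : paux (n + 1) ≤ 2 * ((n:ℝ) + 1) ^ 2 := by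
    have h1 := paux_le (n + 1)
    push_cast at h1
    nlinarith [Nat.cast_nonneg (α := ℝ) n]
  calc pshift n y ≤ (1 * M ^ n / n.factorial) * (2 * ((n:ℝ) + 1) ^ 2) := by
        unfold pshift
        gcongr
        all_goals first
          | positivity
          | exact paux_nonneg _
          | exact hb
          | exact Real.exp_le_one_iff.mpr (by linarith)
          | exact hy
          | exact hyM
          | exact pow_le_pow_left hy hyM n
    _ = 2 * (((n : ℝ) + 1) ^ 2 * M ^ n / n.factorial) := by ring

lemma pc_le (hy : 0 ≤ y) (hyM : y ≤ M) (hM : 1 ≤ M) (n : ℕ) :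
    pc n y ≤ 2 * (((n : ℝ) + 1) ^ 2 * M ^ n / n.factorial) := by
  have hM0 : (0:ℝ) ≤ M := by linarith
  have hfac : (0:ℝ) < n.factorial := by positivity
  have hynM : y ^ (n - 1) ≤ M ^ n :=
    (pow_le_pow_left₀ hy hyM (n-1)).trans (pow_le_pow_right₀ hM (Nat.sub_le n 1))
  calc pc n y ≤ (1 * ((n:ℝ) * M ^ n) / n.factorial) * (2 * n) := by
        unfold pc
        gcongr
        all_goals first
          | positivity
          | exact paux_nonneg _
          | exact paux_le n
          | exact Real.exp_le_one_iff.mpr (by linarith)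
          | exact hynM
    _ = (2 * (n:ℝ) * (n:ℝ)) * (M ^ n / n.factorial) := by ring
    _ ≤ (2 * ((n:ℝ) + 1) ^ 2) * (M ^ n / n.factorial) := by
        refine mul_le_mul_of_nonneg_right (by nlinarith [Nat.cast_nonneg (α := ℝ) n])
          (div_nonneg (pow_nonneg hM0 n) hfac.le)
    _ = 2 * (((n : ℝ) + 1) ^ 2 * M ^ n / n.factorial) := by ring

lemma pderiv_norm_le (hy : 0 ≤ y) (hyM : y ≤ M) (hM : 1 ≤ M) (n : ℕ) :
    ‖pderiv n y‖ ≤ 4 * (((n : ℝ) + 1) ^ 2 * M ^ n / n.factorial) := by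
  have h1 := pterm_le hy hyM hM n
  have h2 := pc_le hy hyM hM n
  have h3 := pterm_nonneg n hy
  have h4 := pc_nonneg n hy
  rw [Real.norm_eq_abs]
  unfold pderiv
  rw [abs_sub_le_iff]
  constructor <;> linarith

lemma summable_pterm (hy : 0 ≤ y) (hyM : y ≤ M) (hM : 1 ≤ M) :
    Summable (fun n => pterm n y) :=
  Summable.of_nonneg_of_le (fun n => pterm_nonneg n hy) (pterm_le hy hyM hM)
    ((key_summable (by linarith)).mul_left 2)

lemma summable_pc (hy : 0 ≤ y) (hyM : y ≤ M) (hM : 1 ≤ M) :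
    Summable (fun n => pc n y) :=
  Summable.of_nonneg_of_le (fun n => pc_nonneg n hy) (pc_le hy hyM hM)
    ((key_summable (by linarith)).mul_left 2)

lemma summable_pshift (hy : 0 ≤ y) (hyM : y ≤ M) (hM : 1 ≤ M) :
    Summable (fun n => pshift n y) :=
  Summable.of_nonneg_of_le (fun n => pshift_nonneg n hy) (pshift_le hy hyM hM)
    ((key_summable (by linarith)).mul_left 2)

lemma tsum_pderiv_pos (hy : 0 < y) (hyM : y ≤ M) (hM : 1 ≤ M) :
    0 < ∑' n, pderiv n y := by
  have hc := summable_pc hy.le hyM hM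
  have he := summable_pterm hy.le hyM hM
  have hs := summable_pshift hy.le hyM hM
  have h2 : ∑' n, pc n y = ∑' n, pshift n y := by
    rw [Summable.tsum_eq_zero_add hc, pc_zero, zero_add]
    exact tsum_congr fun n => pc_succ n y
  have h3 : ∑' n, pderiv n y = ∑' n, (pshift n y - pterm n y) := by
    unfold pderiv
    rw [Summable.tsum_sub hc he, h2, ← Summable.tsum_sub hs he]
  rw [h3]
  apply Summable.tsum_pos (hs.sub he) (fun n => ?_) 1
  · unfold pshift pterm
    rw [← mul_sub]
    have hp : paux (1 + 1) - paux 1 = 1 := paux_two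
    rw [hp, mul_one]
    positivity
  · unfold pshift pterm
    rw [← mul_sub]
    exact mul_nonneg (by positivity) (sub_nonneg.mpr (paux_mono n))

/-- The function g(μ) = 2·E[1_{N>1} ∑_{i=2}^N 1/i], with N ~ Poisson(μ),
is strictly increasing in μ > 0. -/
theorem poisson_expectation_strictMono (g : ℝ → ℝ)
    (hg : ∀ μ : ℝ, g μ = ∑' n : ℕ,
        (Real.exp (-μ) * μ ^ n / n.factorial) *
          (if 1 < n then 2 * ∑ i ∈ Finset.Icc 2 n, (1 : ℝ) / i else 0)) :
    StrictMonoOn g (Set.Ioi (0 : ℝ)) := by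
  intro μ hμ ν hν hμν
  rw [Set.mem_Ioi] at hμ hν
  set M : ℝ := ν + 1 with hMdef
  have hM : 1 ≤ M := by linarith
  have hgf : g = fun y => ∑' n, pterm n y := by
    funext y
    rw [hg y]
    exact tsum_congr fun n => by rw [pterm, paux]
  have key : ∀ x ∈ Set.Ioo (0:ℝ) M, HasDerivAt g (∑' n, pderiv n x) x := by
    intro x hx
    rw [hgf]
    refine hasDerivAt_tsum_of_isPreconnected
      (u := fun n : ℕ => 4 * (((n : ℝ) + 1) ^ 2 * M ^ n / n.factorial))
      ((key_summable (by linarith : (0:ℝ) ≤ M)).mul_left 4) isOpen_Ioo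
      ((convex_Ioo 0 M).isPreconnected)
      (fun n y _ => hasDerivAt_pterm n y)
      (fun n y hy => pderiv_norm_le hy.1.le hy.2.le hM n)
      (⟨hμ, by linarith⟩ : μ ∈ Set.Ioo (0:ℝ) M)
      (summable_pterm hμ.le (by linarith) hM) hx
  have hsub : Set.Icc μ ν ⊆ Set.Ioo (0:ℝ) M := fun x hx =>
    ⟨lt_of_lt_of_le hμ hx.1, lt_of_le_of_lt hx.2 (by linarith)⟩
  have hcont : ContinuousOn g (Set.Icc μ ν) := fun x hx =>
    ((key x (hsub hx)).continuousAt).continuousWithinAt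
  have hpos : ∀ x ∈ interior (Set.Icc μ ν), 0 < deriv g x := by
    rw [interior_Icc]
    intro x hx
    have hx' : x ∈ Set.Ioo (0:ℝ) M := hsub ⟨hx.1.le, hx.2.le⟩
    rw [(key x hx').deriv]
    exact tsum_pderiv_pos hx'.1 hx'.2.le hM
  exact strictMonoOn_of_deriv_pos (convex_Icc μ ν) hcont hpos
    ⟨le_refl μ, hμν.le⟩ ⟨hμν.le, le_refl ν⟩ hμν
end

section
/- Let θ ∈ (0,1]^n with θ_i < 1 exactly for indices i in a set u ⊆ {1,...,n}, and suppose θ_i > 0 for all i ≤ max(u). Define F(z_i) = 1 − ∏_{j=1}^{i} θ_j. Then F(z_i) < 1 for all i < max(u), F is strictly increasing exactly at the indices in u (i.e., F(z_i) > F(z_{i-1}) if and only if i ∈ u and F(z_{i-1}) < 1), and F(z_i) = F(z_{i-1}) for i ∉ u with i < max(u). -/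
open Finset

theorem mul_lt_left_iff_of_nonneg {α : Type*} [Semiring α] [LinearOrder α] [IsStrictOrderedRing α]
    {p t : α} (hp : 0 ≤ p) : p * t < p ↔ 0 < p ∧ t < 1 := by
  rcases hp.eq_or_lt with rfl | hp
  · simp
  · simp [hp, mul_lt_iff_lt_one_right hp]

theorem prod_Icc_one_pred_mul {M : Type*} [CommMonoid M] (f : ℕ → M) {i : ℕ} (hi : 1 ≤ i) :
    (∏ j ∈ Icc 1 (i - 1), f j) * f i = ∏ j ∈ Icc 1 i, f j := by
  obtain ⟨k, rfl⟩ := Nat.exists_eq_add_of_le' hi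
  rw [Nat.add_sub_cancel, prod_Icc_succ_top (by omega)]

theorem theta_jump_characterization_general (n : ℕ) (θ : ℕ → ℝ) (u : Finset ℕ)
    (hu : u.Nonempty)
    (hθ01 : ∀ i, 1 ≤ i → i ≤ n → 0 ≤ θ i ∧ θ i ≤ 1)
    (hθu : ∀ i, 1 ≤ i → i ≤ n → (θ i < 1 ↔ i ∈ u))
    (hθpos : ∀ i, 1 ≤ i → i ≤ u.max' hu → 0 < θ i)
    (F : ℕ → ℝ) (hF : ∀ i, F i = 1 - ∏ j ∈ Finset.Icc 1 i, θ j) :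
    (∀ i < u.max' hu, F i < 1) ∧
    (∀ i, 1 ≤ i → i ≤ n → (F (i - 1) < F i ↔ i ∈ u ∧ F (i - 1) < 1)) ∧
    (∀ i, 1 ≤ i → i ≤ n → i ∉ u → i < u.max' hu → F i = F (i - 1)) := by
  have hstep : ∀ i, 1 ≤ i → F i = 1 - (∏ j ∈ Icc 1 (i - 1), θ j) * θ i := fun i hi => by
    rw [hF, prod_Icc_one_pred_mul θ hi]
  refine ⟨fun i hi => ?_, fun i h1 hn => ?_, fun i h1 hn hiu _ => ?_⟩
  · have hpos : 0 < ∏ j ∈ Icc 1 i, θ j :=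
      prod_pos fun j hj => hθpos j (mem_Icc.1 hj).1 (by grind)
    linarith [hF i]
  · have hnonneg : 0 ≤ ∏ j ∈ Icc 1 (i - 1), θ j :=
      prod_nonneg fun j hj => (hθ01 j (mem_Icc.1 hj).1 (by grind)).1
    rw [hstep i h1, hF (i - 1), sub_lt_sub_iff_left, mul_lt_left_iff_of_nonneg hnonneg,
      hθu i h1 hn, sub_lt_self_iff, and_comm]
  · have hθ1 : θ i = 1 :=
      (hθ01 i h1 hn).2.eq_of_not_lt fun h => hiu ((hθu i h1 hn).1 h)
    rw [hstep i h1, hθ1, mul_one, hF]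

/-- Characterization of step CDFs via the θ-parametrization: with θ_i ∈ (0,1],
θ_i < 1 exactly on u, and θ_i > 0 for i ≤ max u, the values
F_i = 1 − ∏_{j≤i} θ_j satisfy F_i < 1 for i < max u, and F increases exactly at
the indices in u. -/
theorem theta_jump_characterization (n : ℕ) (θ : ℕ → ℝ) (u : Finset ℕ)
    (hu : u.Nonempty) (husub : u ⊆ Finset.Icc 1 n)
    (hθ01 : ∀ i, 1 ≤ i → i ≤ n → 0 ≤ θ i ∧ θ i ≤ 1)
    (hθu : ∀ i, 1 ≤ i → i ≤ n → (θ i < 1 ↔ i ∈ u))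
    (hθpos : ∀ i, 1 ≤ i → i ≤ u.max' hu → 0 < θ i)
    (F : ℕ → ℝ) (hF : ∀ i, F i = 1 - ∏ j ∈ Finset.Icc 1 i, θ j) :
    (∀ i < u.max' hu, F i < 1) ∧
    (∀ i, 1 ≤ i → i ≤ n → (F (i - 1) < F i ↔ i ∈ u ∧ F (i - 1) < 1)) ∧
    (∀ i, 1 ≤ i → i ≤ n → i ∉ u → i < u.max' hu → F i = F (i - 1)) :=
  theta_jump_characterization_general n θ u hu hθ01 hθu hθpos F hF
end
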